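/- Let w₁, w₂ be real numbers with w₁ ≥ 0, w₂ ≥ 0 and 3·w₁ + 2·w₂ ≥ 1, and let T₀ = w₁·(K₅⁺ + K₃⁻ + K₁⁺) + w₂·(L₃⁺ + L₃⁻) + L₁⁺. Then for every density matrix σ on ℂ² ⊗ ℂ² with θ = ⟨φ⁰, σ φ⁰⟩ ≥ 1/4, one has Tr((σ ⊗ σ)·T₀) ≥ θ² + (1 − θ)²/3, i.e., the W-invariant test T₀ᵂ with w₁ = 1/3, w₂ = 0 uniformly minimizes the type 2 error probability on this set of states. -/

import Mathlib

open Matrix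
open scoped Matrix Kronecker ComplexOrder

noncomputable section

/-- Index type of `ℂ² ⊗ ℂ²`. -/
abbrev Q : Type := Fin 2 × Fin 2

/-- The standard basis vector `|ab⟩` of `ℂ² ⊗ ℂ²`. -/
def ket (a b : Fin 2) : Q → ℂ := fun p => if p = (a, b) then 1 else 0

/-- The Bell basis `φ⁰, φ¹, φ², φ³` of `ℂ² ⊗ ℂ²`. -/
def bell : Fin 4 → Q → ℂ
  | 0 => fun p => (ket 0 0 p + ket 1 1 p) / (Real.sqrt 2 : ℂ)
  | 1 => fun p => Complex.I * (ket 0 1 p + ket 1 0 p) / (Real.sqrt 2 : ℂ)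
  | 2 => fun p => (-ket 0 1 p + ket 1 0 p) / (Real.sqrt 2 : ℂ)
  | 3 => fun p => Complex.I * (ket 0 0 p - ket 1 1 p) / (Real.sqrt 2 : ℂ)

/-- The product basis `e^{jk} = φʲ ⊗ φᵏ` of `(ℂ²⊗ℂ²)⊗(ℂ²⊗ℂ²)`. -/
def e (j k : Fin 4) : Q × Q → ℂ := fun pq => bell j pq.1 * bell k pq.2

/-- Rank-one operator `|v⟩⟨v|`. -/
def outer {m : Type*} (v : m → ℂ) : Matrix m m ℂ := vecMulVec v (star v)

/-- Orthogonal projection onto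
`span{e^{jk}+e^{kj} : 1≤j<k≤3} ∪ {e^{11}−e^{22}, e^{22}−e^{33}}`. -/
def K5 : Matrix (Q × Q) (Q × Q) ℂ :=
  (1 / 2 : ℂ) • (outer (e 1 2 + e 2 1) + outer (e 2 3 + e 3 2) + outer (e 3 1 + e 1 3)) +
    (1 / 2 : ℂ) • outer (e 1 1 - e 2 2) +
    (1 / 6 : ℂ) • outer (e 1 1 + e 2 2 - (2 : ℂ) • e 3 3)

/-- Orthogonal projection onto `span{e^{11}+e^{22}+e^{33}}`. -/
def K1 : Matrix (Q × Q) (Q × Q) ℂ :=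
  (1 / 3 : ℂ) • outer (e 1 1 + e 2 2 + e 3 3)

/-- Orthogonal projection onto `span{e^{jk}−e^{kj} : 1≤j<k≤3}`. -/
def K3m : Matrix (Q × Q) (Q × Q) ℂ :=
  (1 / 2 : ℂ) • (outer (e 1 2 - e 2 1) + outer (e 2 3 - e 3 2) + outer (e 3 1 - e 1 3))

/-- Orthogonal projection onto `span{e^{00}}`. -/
def L1 : Matrix (Q × Q) (Q × Q) ℂ := outer (e 0 0)

/-- Orthogonal projection onto `span{e^{0j}+e^{j0} : j=1,2,3}`. -/
def L3p : Matrix (Q × Q) (Q × Q) ℂ :=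
  (1 / 2 : ℂ) • (outer (e 0 1 + e 1 0) + outer (e 0 2 + e 2 0) + outer (e 0 3 + e 3 0))

/-- Orthogonal projection onto `span{e^{0j}−e^{j0} : j=1,2,3}`. -/
def L3m : Matrix (Q × Q) (Q × Q) ℂ :=
  (1 / 2 : ℂ) • (outer (e 0 1 - e 1 0) + outer (e 0 2 - e 2 0) + outer (e 0 3 - e 3 0))

/-- The matrix elements `x_{jk} = ⟨φʲ, σ φᵏ⟩` of a state `σ` in the Bell basis. -/
def x (σ : Matrix Q Q ℂ) (j k : Fin 4) : ℂ := star (bell j) ⬝ᵥ σ.mulVec (bell k)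

/-!
Expanded in the Bell basis, every projection in `T₀` is a sum of the rank-one projections onto
the product vectors `e^{jk}`: `K₅⁺ + K₃⁻ + K₁⁺` collects all `j, k ≥ 1`, `L₃⁺ + L₃⁻` the pairs with
exactly one index `0`, and `L₁⁺` the pair `(0, 0)`. Since `Tr((σ ⊗ σ) |e^{jk}⟩⟨e^{jk}|) = x_{jj} x_{kk}`,
only the diagonal Bell weights of `σ` enter, and with `s = x₁₁ + x₂₂ + x₃₃ = 1 - θ`,
`Tr((σ ⊗ σ) T₀) = w₁ s² + 2 w₂ θ s + θ²`. The claim becomes an elementary inequality in `θ, s`,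
which holds as soon as `s ≤ 3θ`, i.e. `θ ≥ 1/4`.
-/

lemma outer_prod {m n : Type*} (u : m → ℂ) (v : n → ℂ) :
    outer (fun pq : m × n => u pq.1 * v pq.2) = outer u ⊗ₖ outer v := by
  ext ⟨i, j⟩ ⟨k, l⟩
  simp only [outer, vecMulVec_apply, kroneckerMap_apply, Pi.star_apply, star_mul']
  ring

section Trace

variable {m n : Type*} [Fintype m] [Fintype n]

lemma trace_mul_outer (A : Matrix m m ℂ) (u : m → ℂ) :
    (A * outer u).trace = star u ⬝ᵥ A *ᵥ u := by
  rw [outer, mul_vecMulVec, trace_vecMulVec, dotProduct_comm]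

lemma trace_kronecker_mul_outer_prod (A : Matrix m m ℂ) (B : Matrix n n ℂ) (u : m → ℂ)
    (v : n → ℂ) :
    ((A ⊗ₖ B) * outer (fun pq : m × n => u pq.1 * v pq.2)).trace =
      (star u ⬝ᵥ A *ᵥ u) * (star v ⬝ᵥ B *ᵥ v) := by
  rw [outer_prod, ← mul_kronecker_mul, trace_kronecker, trace_mul_outer, trace_mul_outer]

end Trace

lemma sum_outer_bell : ∑ j, outer (bell j) = 1 := by
  have h2 : (Real.sqrt 2 : ℂ)⁻¹ ^ 2 = 2⁻¹ := by
    rw [inv_pow, ← Complex.ofReal_pow, Real.sq_sqrt zero_le_two, Complex.ofReal_ofNat]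
  ext ⟨a, b⟩ ⟨c, d⟩
  fin_cases a <;> fin_cases b <;> fin_cases c <;> fin_cases d <;>
    simp [Fin.sum_univ_four, outer, vecMulVec_apply, bell, ket, one_apply, div_eq_mul_inv] <;>
    ring_nf <;> simp only [Complex.I_sq, h2] <;> norm_num

lemma sum_x_self_eq_trace (σ : Matrix Q Q ℂ) : ∑ j, x σ j j = σ.trace := by
  simp_rw [x, ← trace_mul_outer, ← trace_sum, ← Finset.mul_sum, sum_outer_bell, mul_one]

def bellBlock (S T : Finset (Fin 4)) : Matrix (Q × Q) (Q × Q) ℂ :=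
  ∑ j ∈ S, ∑ k ∈ T, outer (e j k)

lemma trace_kronecker_mul_bellBlock (σ : Matrix Q Q ℂ) (S T : Finset (Fin 4)) :
    ((σ ⊗ₖ σ) * bellBlock S T).trace = (∑ j ∈ S, x σ j j) * ∑ k ∈ T, x σ k k := by
  simp only [bellBlock, Matrix.mul_sum, trace_sum, Finset.sum_mul_sum]
  exact Finset.sum_congr rfl fun j _ => Finset.sum_congr rfl fun k _ =>
    trace_kronecker_mul_outer_prod σ σ (bell j) (bell k)

lemma K5_add_K3m_add_K1 : K5 + K3m + K1 = bellBlock {1, 2, 3} {1, 2, 3} := by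
  ext i j
  simp only [K5, K3m, K1, bellBlock, outer, one_div, star_add, star_sub, star_smul, star_ofNat,
    smul_add, Matrix.add_apply, Matrix.smul_apply, vecMulVec_apply, Pi.add_apply, Pi.sub_apply,
    Pi.smul_apply, Pi.star_apply, RCLike.star_def, smul_eq_mul, Finset.mem_insert,
    Finset.mem_singleton, Fin.reduceEq, or_self, not_false_eq_true, Finset.sum_insert,
    Finset.sum_singleton]
  ring

lemma L3p_add_L3m : L3p + L3m = bellBlock {0} {1, 2, 3} + bellBlock {1, 2, 3} {0} := by
  ext i j
  simp only [L3p, L3m, bellBlock, outer, one_div, star_add, star_sub, smul_add, Matrix.add_apply,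
    Matrix.smul_apply, vecMulVec_apply, Pi.add_apply, Pi.sub_apply, Pi.star_apply,
    RCLike.star_def, smul_eq_mul, Finset.mem_insert, Finset.mem_singleton, Fin.reduceEq, or_self,
    not_false_eq_true, Finset.sum_insert, Finset.sum_singleton]
  ring

lemma L1_eq_bellBlock : L1 = bellBlock {0} {0} := by
  simp [L1, bellBlock]

lemma trace_kronecker_mul_test (σ : Matrix Q Q ℂ) (w1 w2 : ℂ) :
    ((σ ⊗ₖ σ) * (w1 • (K5 + K3m + K1) + w2 • (L3p + L3m) + L1)).trace =
      w1 * (∑ j ∈ {1, 2, 3}, x σ j j) ^ 2 + 2 * w2 * x σ 0 0 * (∑ j ∈ {1, 2, 3}, x σ j j) +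
        x σ 0 0 ^ 2 := by
  simp only [K5_add_K3m_add_K1, L3p_add_L3m, L1_eq_bellBlock, Matrix.mul_add, Matrix.mul_smul,
    trace_add, trace_smul, trace_kronecker_mul_bellBlock, Finset.sum_singleton, smul_eq_mul]
  ring

-- `3 (rhs - lhs) = (3 w₁ + 2 w₂ - 1) s² + 2 w₂ s (3 θ - s)`
lemma sq_add_sq_div_three_le {w1 w2 θ s : ℝ} (hw2 : 0 ≤ w2) (hw : 1 ≤ 3 * w1 + 2 * w2)
    (hs : 0 ≤ s) (hsθ : s ≤ 3 * θ) :
    θ ^ 2 + s ^ 2 / 3 ≤ w1 * s ^ 2 + 2 * w2 * θ * s + θ ^ 2 := by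
  nlinarith [mul_nonneg (mul_nonneg hw2 hs) (sub_nonneg.2 hsθ),
    mul_nonneg (sub_nonneg.2 hw) (sq_nonneg s)]

theorem stmt16_general (w1 w2 : ℝ) (hw2 : 0 ≤ w2) (hw : 1 ≤ 3 * w1 + 2 * w2)
    (σ : Matrix Q Q ℂ) (hσ : σ.PosSemidef) (htr : σ.trace = 1)
    (θ : ℝ) (hθ : (θ : ℂ) = star (bell 0) ⬝ᵥ σ.mulVec (bell 0)) (hθ4 : 1 / 4 ≤ θ) :
    θ ^ 2 + (1 - θ) ^ 2 / 3 ≤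
      (((σ ⊗ₖ σ) * ((w1 : ℂ) • (K5 + K3m + K1) + (w2 : ℂ) • (L3p + L3m) + L1)).trace).re := by
  have hnonneg (j : Fin 4) : 0 ≤ x σ j j := hσ.dotProduct_mulVec_nonneg (bell j)
  have hreal (j : Fin 4) : x σ j j = (x σ j j).re :=
    Complex.eq_re_of_ofReal_le (by exact_mod_cast hnonneg j)
  set s := ∑ j ∈ {1, 2, 3}, (x σ j j).re
  have hs : ∑ j ∈ {1, 2, 3}, x σ j j = s := by
    simp only [s, Complex.ofReal_sum, ← hreal]
  have hx0 : x σ 0 0 = θ := hθ.symm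
  have hθs : θ + s = 1 := by
    have htr' := sum_x_self_eq_trace σ
    rw [show (Finset.univ : Finset (Fin 4)) = insert 0 {1, 2, 3} by decide,
      Finset.sum_insert (by decide), hs, hx0, htr] at htr'
    exact_mod_cast htr'
  have hs0 : 0 ≤ s := Finset.sum_nonneg fun j _ => (Complex.nonneg_iff.1 (hnonneg j)).1
  rw [trace_kronecker_mul_test, hs, hx0]
  norm_cast
  rw [show 1 - θ = s by linarith]
  exact sq_add_sq_div_three_le hw2 hw hs0 (by linarith)

/-- Among the W-invariant level-zero tests
`T₀ = w₁(K₅⁺+K₃⁻+K₁⁺) + w₂(L₃⁺+L₃⁻) + L₁⁺` with `w₁, w₂ ≥ 0` and `3w₁+2w₂ ≥ 1`,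
the test with `w₁ = 1/3, w₂ = 0` uniformly minimizes the type 2 error probability
on states with `θ = ⟨φ⁰, σ φ⁰⟩ ≥ 1/4`: one always has
`Tr((σ⊗σ) T₀) ≥ θ² + (1−θ)²/3`. -/
theorem stmt16 (w1 w2 : ℝ) (hw1 : 0 ≤ w1) (hw2 : 0 ≤ w2) (hw : 1 ≤ 3 * w1 + 2 * w2)
    (σ : Matrix Q Q ℂ) (hσ : σ.PosSemidef) (htr : σ.trace = 1)
    (θ : ℝ) (hθ : (θ : ℂ) = star (bell 0) ⬝ᵥ σ.mulVec (bell 0)) (hθ4 : 1 / 4 ≤ θ) :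
    θ ^ 2 + (1 - θ) ^ 2 / 3 ≤
      (((σ ⊗ₖ σ) * ((w1 : ℂ) • (K5 + K3m + K1) + (w2 : ℂ) • (L3p + L3m) + L1)).trace).re :=
  stmt16_general w1 w2 hw2 hw σ hσ htr θ hθ hθ4
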